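/- arXiv:2209.09748 — 2 statements merged into one kernel-verified Lean document; each statement's English description precedes it below -/
import Mathlib

section
/- Assume R is simply-laced and let α be a simple root. Let u_α be the unique element of minimal length in W such that u_α^{-1}(α_0) = α, and set v_α := u_α s_α. Then ℓ(v_α) = ht(α_0), where for β = Σ_{i=1}^{n} k_i α_i the height is ht(β) := Σ_{i=1}^{n} k_i. -/
noncomputable section

open scoped Classical

local notation "⟪" x ", " y "⟫" => @inner ℝ _ _ x y

namespace PaperFormal

variable (V : Type*) [NormedAddCommGroup V] [InnerProductSpace ℝ V] [FiniteDimensional ℝ V]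

/-- The reflection of the Euclidean space `V` in the hyperplane orthogonal to `v`,
i.e. `β ↦ β - (2⟪β,v⟫/⟪v,v⟫) v`. -/
def sref (v : V) : V ≃ₗᵢ[ℝ] V := Submodule.reflection (ℝ ∙ v)ᗮ

/-- A reduced irreducible crystallographic root system `R` in the Euclidean space `V`,
together with a fixed base of simple roots `a 1, …, a n`. -/
structure RootSystemWithBase (n : ℕ) : Type _ where
  /-- the set of roots -/
  R : Set V
  /-- the simple roots `a 1, …, a n` (values outside `{1, …, n}` are irrelevant) -/
  a : ℕ → V
  finite : R.Finite
  ne_zero : ∀ β ∈ R, β ≠ 0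
  refl_mem : ∀ α ∈ R, ∀ β ∈ R, sref V α β ∈ R
  crystallographic : ∀ α ∈ R, ∀ β ∈ R, ∃ k : ℤ, 2 * ⟪β, α⟫ / ⟪α, α⟫ = (k : ℝ)
  reduced : ∀ α ∈ R, ∀ t : ℝ, t • α ∈ R → t = 1 ∨ t = -1
  irreducible : ∀ P : Set V, (∀ x ∈ R, ∀ y ∈ R, x ∈ P → ⟪x, y⟫ ≠ 0 → y ∈ P) →
      (R ∩ P).Nonempty → R ⊆ P
  simple_mem : ∀ i ∈ Finset.Icc 1 n, a i ∈ R
  indep : LinearIndependent ℝ (fun i : (Set.Icc 1 n : Set ℕ) => a i)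
  span_top : Submodule.span ℝ (a '' Set.Icc 1 n) = ⊤
  root_combo : ∀ β ∈ R, ∃ c : ℕ → ℤ, ((∀ i, 0 ≤ c i) ∨ (∀ i, c i ≤ 0)) ∧
      β = ∑ i ∈ Finset.Icc 1 n, (c i : ℝ) • a i

namespace RootSystemWithBase

variable {V} {n : ℕ} (S : RootSystemWithBase V n)

/-- The simple reflection `s i` associated to the simple root `a i`. -/
def s (i : ℕ) : V ≃ₗᵢ[ℝ] V := sref V (S.a i)

/-- The product of the simple reflections along a list of indices
(leftmost factor acting last). -/
def prodW (l : List ℕ) : V ≃ₗᵢ[ℝ] V := (l.map S.s).prod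

/-- The parabolic subgroup `W_J` of the Weyl group generated by the simple reflections
`s i` for `i ∈ J`. -/
def WJ (J : Set ℕ) : Subgroup (V ≃ₗᵢ[ℝ] V) :=
  Subgroup.closure (S.s '' (J ∩ Set.Icc 1 n))

/-- The Weyl group `W`, generated by all simple reflections. -/
def W : Subgroup (V ≃ₗᵢ[ℝ] V) := S.WJ Set.univ

/-- The length of `w` with respect to the simple reflections indexed by `J`:
the least length of a word in these reflections expressing `w`. -/
def lenJ (J : Set ℕ) (w : V ≃ₗᵢ[ℝ] V) : ℕ :=
  sInf {k | ∃ l : List ℕ, (∀ i ∈ l, i ∈ J ∩ Set.Icc 1 n) ∧ l.length = k ∧ w = S.prodW l}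

/-- The length function `ℓ` of the Weyl group. -/
def len (w : V ≃ₗᵢ[ℝ] V) : ℕ := S.lenJ Set.univ w

/-- `w` is the longest element `w_{0,J}` of the parabolic subgroup `W_J`. -/
def IsLongest (J : Set ℕ) (w : V ≃ₗᵢ[ℝ] V) : Prop :=
  w ∈ S.WJ J ∧ ∀ x ∈ S.WJ J, S.lenJ J x ≤ S.lenJ J w

/-- `β` is a positive root (with respect to the base `a`). -/
def IsPos (β : V) : Prop :=
  β ∈ S.R ∧ ∃ c : ℕ → ℝ, (∀ i, 0 ≤ c i) ∧ β = ∑ i ∈ Finset.Icc 1 n, c i • S.a i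

/-- `β` is a negative root. -/
def IsNeg (β : V) : Prop := S.IsPos (-β)

/-- `h` is the highest root `α_0`: a root such that `h - β` is a nonnegative combination of
the simple roots for every root `β`. -/
def IsHighest (h : V) : Prop :=
  h ∈ S.R ∧ ∀ β ∈ S.R, ∃ c : ℕ → ℝ, (∀ i, 0 ≤ c i) ∧
    h - β = ∑ i ∈ Finset.Icc 1 n, c i • S.a i

/-- The root system is simply laced: all roots have the same length. -/
def SimplyLaced : Prop := ∀ α ∈ S.R, ∀ β ∈ S.R, ⟪α, α⟫ = ⟪β, β⟫

/-- `ω` is the fundamental weight `ω_r` dual to the simple root `a r`: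
`⟨ω, a j⟩ = δ_{rj}` for `1 ≤ j ≤ n`. -/
def IsFundamental (r : ℕ) (ω : V) : Prop :=
  ∀ j ∈ Finset.Icc 1 n, 2 * ⟪ω, S.a j⟫ / ⟪S.a j, S.a j⟫ = if j = r then 1 else 0

/-- A weight `ω` is minuscule: `⟨ω, β⟩ ≤ 1` for every positive root `β`. -/
def Minuscule (ω : V) : Prop := ∀ β, S.IsPos β → 2 * ⟪ω, β⟫ / ⟪β, β⟫ ≤ 1

/-! ### Auxiliary development -/

/-- The potential function used in the lower bound argument. -/
def gpot : ℝ → ℝ := fun h => if 0 < h then h else h + 1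

/-- Integer version of the potential function. -/
def gzpot : ℤ → ℤ := fun m => if 0 < m then m else m + 1

lemma gpot_intCast (m : ℤ) : gpot (m : ℝ) = (gzpot m : ℝ) := by
  unfold gpot gzpot
  by_cases h : 0 < m
  · rw [if_pos h, if_pos (by exact_mod_cast h)]
  · rw [if_neg h, if_neg (by exact_mod_cast h)]
    push_cast; ring

lemma sref_apply' (v x : V) :
    sref V v x = x - (2 * ⟪x, v⟫ / ⟪v, v⟫) • v := by
  by_cases hv : v = 0
  · subst hv
    have : sref V (0 : V) x = x := by
      unfold sref
      rw [Submodule.reflection_eq_self_iff]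
      simp [Submodule.mem_orthogonal]
    rw [this]; simp
  · have h1 : sref V v x = -(Submodule.reflection (ℝ ∙ v) x) :=
      Submodule.reflection_orthogonal_apply (ℝ ∙ v) x
    rw [h1, Submodule.reflection_singleton_apply, neg_sub]
    simp only [RCLike.ofReal_real_eq_id, id_eq]
    congr 1
    rw [← Nat.cast_smul_eq_nsmul ℝ, Nat.cast_ofNat, smul_smul, real_inner_comm v x,
      ← real_inner_self_eq_norm_sq]
    congr 1
    ring

lemma sref_self (v : V) : sref V v v = -v :=
  Submodule.reflection_orthogonalComplement_singleton_eq_neg v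

lemma neg_mem_R {β : V} (hβ : β ∈ S.R) : -β ∈ S.R := by
  have := S.refl_mem β hβ β hβ
  rwa [sref_self] at this

/-- The basis of `V` given by the simple roots. -/
def bas : Module.Basis (Set.Icc 1 n : Set ℕ) ℝ V :=
  Module.Basis.mk S.indep (by
    rw [← Set.image_eq_range]
    exact le_of_eq S.span_top.symm)

/-- The height linear functional: sum of coordinates w.r.t. the simple roots. -/
def height : V →ₗ[ℝ] ℝ := S.bas.constr ℝ fun _ => (1 : ℝ)

lemma height_a {i : ℕ} (hi : i ∈ Finset.Icc 1 n) : S.height (S.a i) = 1 := by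
  have hi' : i ∈ (Set.Icc 1 n : Set ℕ) := by
    simpa [Set.mem_Icc] using Finset.mem_Icc.mp hi
  have hb : S.a i = S.bas ⟨i, hi'⟩ := by
    simp [bas, Module.Basis.mk_apply]
  rw [hb]
  simp [height, Module.Basis.constr_basis]

lemma height_combo (c : ℕ → ℝ) :
    S.height (∑ i ∈ Finset.Icc 1 n, c i • S.a i) = ∑ i ∈ Finset.Icc 1 n, c i := by
  rw [map_sum]
  refine Finset.sum_congr rfl fun i hi => ?_
  rw [map_smul, S.height_a hi, smul_eq_mul, mul_one]

lemma height_int_ne_zero {β : V} (hβ : β ∈ S.R) :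
    ∃ m : ℤ, S.height β = (m : ℝ) ∧ m ≠ 0 := by
  obtain ⟨c, hsign, hcomb⟩ := S.root_combo β hβ
  refine ⟨∑ i ∈ Finset.Icc 1 n, c i, ?_, ?_⟩
  · rw [hcomb, S.height_combo]; push_cast; rfl
  · intro h0
    have hzero : ∀ i ∈ Finset.Icc 1 n, c i = 0 := by
      rcases hsign with hpos | hneg
      · intro i hi
        exact (Finset.sum_eq_zero_iff_of_nonneg (fun j _ => hpos j)).mp h0 i hi
      · intro i hi
        have : ∑ i ∈ Finset.Icc 1 n, (-(c i)) = 0 := by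
          rw [Finset.sum_neg_distrib, h0, neg_zero]
        have := (Finset.sum_eq_zero_iff_of_nonneg
          (fun j _ => neg_nonneg.mpr (hneg j))).mp this i hi
        omega
    apply S.ne_zero β hβ
    rw [hcomb]
    apply Finset.sum_eq_zero
    intro i hi
    rw [hzero i hi]; simp

lemma height_le_highest {α0 : V} (hα0 : S.IsHighest α0) {β : V} (hβ : β ∈ S.R) :
    S.height β ≤ S.height α0 := by
  obtain ⟨c, hc, hceq⟩ := hα0.2 β hβ
  have : S.height (α0 - β) = ∑ i ∈ Finset.Icc 1 n, c i := by
    rw [hceq, S.height_combo]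
  have hnn : 0 ≤ S.height (α0 - β) := by
    rw [this]
    exact Finset.sum_nonneg fun i _ => hc i
  rw [map_sub] at hnn
  linarith

lemma a_ne_zero {i : ℕ} (hi : i ∈ Finset.Icc 1 n) : S.a i ≠ 0 :=
  S.ne_zero _ (S.simple_mem i hi)

lemma inner_a_self_pos {i : ℕ} (hi : i ∈ Finset.Icc 1 n) : 0 < ⟪S.a i, S.a i⟫ := by
  have h : 0 < ‖S.a i‖ := norm_pos_iff.mpr (S.a_ne_zero hi)
  rw [real_inner_self_eq_norm_mul_norm]
  exact mul_pos h h

lemma s_apply {i : ℕ} (x : V) :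
    S.s i x = x - (2 * ⟪x, S.a i⟫ / ⟪S.a i, S.a i⟫) • S.a i :=
  sref_apply' _ _

lemma s_a_self {i : ℕ} : S.s i (S.a i) = -(S.a i) := sref_self _

lemma height_s {i : ℕ} (hi : i ∈ Finset.Icc 1 n) (x : V) :
    S.height (S.s i x) = S.height x - 2 * ⟪x, S.a i⟫ / ⟪S.a i, S.a i⟫ := by
  rw [S.s_apply, map_sub, map_smul, S.height_a hi, smul_eq_mul, mul_one]

lemma s_mem_R {i : ℕ} (hi : i ∈ Finset.Icc 1 n) {β : V} (hβ : β ∈ S.R) :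
    S.s i β ∈ S.R :=
  S.refl_mem (S.a i) (S.simple_mem i hi) β hβ

lemma cartan_int {β : V} (hβ : β ∈ S.R) {i : ℕ} (hi : i ∈ Finset.Icc 1 n) :
    ∃ c : ℤ, 2 * ⟪β, S.a i⟫ / ⟪S.a i, S.a i⟫ = (c : ℝ) :=
  S.crystallographic (S.a i) (S.simple_mem i hi) β hβ

lemma norm_eq_of_simplyLaced (hsl : S.SimplyLaced) {β γ : V} (hβ : β ∈ S.R)
    (hγ : γ ∈ S.R) : ‖β‖ = ‖γ‖ := by
  have h := hsl β hβ γ hγ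
  rw [real_inner_self_eq_norm_mul_norm, real_inner_self_eq_norm_mul_norm] at h
  exact (mul_self_inj_of_nonneg (norm_nonneg _) (norm_nonneg _)).mp h

lemma eq_of_inner_eq (hsl : S.SimplyLaced) {β γ : V} (hβ : β ∈ S.R) (hγ : γ ∈ S.R)
    (h : ⟪β, γ⟫ = ⟪γ, γ⟫) : β = γ := by
  have hnorm : ‖β‖ = ‖γ‖ := S.norm_eq_of_simplyLaced hsl hβ hγ
  have h1 : ⟪β, γ⟫ = ‖β‖ * ‖γ‖ := by
    rw [h, real_inner_self_eq_norm_mul_norm, hnorm]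
  have h2 : ‖γ‖ • β = ‖β‖ • γ := inner_eq_norm_mul_iff_real.mp h1
  have hγ0 : ‖γ‖ ≠ 0 := norm_ne_zero_iff.mpr (S.ne_zero γ hγ)
  rw [hnorm] at h2
  exact smul_right_injective V hγ0 h2

lemma cartan_bound (hsl : S.SimplyLaced) {β : V} (hβ : β ∈ S.R) {i : ℕ}
    (hi : i ∈ Finset.Icc 1 n) {c : ℤ}
    (hc : 2 * ⟪β, S.a i⟫ / ⟪S.a i, S.a i⟫ = (c : ℝ)) :
    (-2 ≤ c ∧ c ≤ 2) ∧ (c = 2 → β = S.a i) ∧ (c = -2 → β = -(S.a i)) := by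
  set A := S.a i with hA
  have hApos : 0 < ⟪A, A⟫ := S.inner_a_self_pos hi
  have hAR : A ∈ S.R := S.simple_mem i hi
  have hkey : (c : ℝ) * ⟪A, A⟫ = 2 * ⟪β, A⟫ := by
    rw [div_eq_iff (ne_of_gt hApos)] at hc
    linarith [hc]
  have hnorm : ‖β‖ = ‖A‖ := S.norm_eq_of_simplyLaced hsl hβ hAR
  have hCS : |⟪β, A⟫| ≤ ⟪A, A⟫ := by
    have := abs_real_inner_le_norm β A
    rw [hnorm, ← real_inner_self_eq_norm_mul_norm] at this
    exact this
  constructor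
  · constructor
    · have : (-2 : ℝ) ≤ (c : ℝ) := by
        rw [abs_le] at hCS
        have h1 := hCS.1
        nlinarith
      exact_mod_cast this
    · have : (c : ℝ) ≤ 2 := by
        rw [abs_le] at hCS
        have h2 := hCS.2
        nlinarith
      exact_mod_cast this
  constructor
  · intro hc2
    subst hc2
    have : ⟪β, A⟫ = ⟪A, A⟫ := by
      push_cast at hkey
      linarith
    exact S.eq_of_inner_eq hsl hβ hAR this
  · intro hc2
    subst hc2
    have hnA : -A ∈ S.R := S.neg_mem_R hAR
    have : ⟪β, -A⟫ = ⟪-A, -A⟫ := by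
      rw [inner_neg_right, inner_neg_neg]
      push_cast at hkey
      linarith
    exact S.eq_of_inner_eq hsl hβ hnA this

/-! ### Words and the Weyl group -/

lemma prodW_nil : S.prodW [] = 1 := rfl

lemma prodW_cons (i : ℕ) (l : List ℕ) : S.prodW (i :: l) = S.s i * S.prodW l := by
  simp [prodW]

lemma prodW_append (l₁ l₂ : List ℕ) :
    S.prodW (l₁ ++ l₂) = S.prodW l₁ * S.prodW l₂ := by
  simp [prodW]

lemma prodW_singleton (i : ℕ) : S.prodW [i] = S.s i := by
  simp [prodW]

lemma mul_apply (f g : V ≃ₗᵢ[ℝ] V) (x : V) : (f * g) x = f (g x) := rfl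

lemma one_apply (x : V) : (1 : V ≃ₗᵢ[ℝ] V) x = x := rfl

lemma prodW_mem_R {l : List ℕ} (hl : ∀ i ∈ l, i ∈ Finset.Icc 1 n) {β : V}
    (hβ : β ∈ S.R) : S.prodW l β ∈ S.R := by
  induction l with
  | nil => rwa [prodW_nil]
  | cons i l ih =>
    rw [prodW_cons, mul_apply]
    exact S.s_mem_R (hl i (List.mem_cons_self))
      (ih fun j hj => hl j (List.mem_cons_of_mem i hj))

lemma s_mul_self (i : ℕ) : S.s i * S.s i = 1 :=
  Submodule.reflection_mul_reflection _

lemma s_inv (i : ℕ) : (S.s i)⁻¹ = S.s i :=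
  inv_eq_of_mul_eq_one_left (S.s_mul_self i)

lemma prodW_reverse (l : List ℕ) : S.prodW l.reverse = (S.prodW l)⁻¹ := by
  induction l with
  | nil => simp [prodW_nil]
  | cons i l ih =>
    rw [List.reverse_cons, prodW_append, prodW_singleton, ih, prodW_cons,
      mul_inv_rev, S.s_inv]

lemma mem_univ_icc_iff {n : ℕ} (i : ℕ) :
    i ∈ (Set.univ ∩ Set.Icc 1 n : Set ℕ) ↔ i ∈ Finset.Icc 1 n := by
  simp [Set.mem_Icc, Finset.mem_Icc]

lemma s_mem_W {i : ℕ} (hi : i ∈ Finset.Icc 1 n) : S.s i ∈ S.W := by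
  apply Subgroup.subset_closure
  exact ⟨i, (mem_univ_icc_iff (n := n) i).mpr hi, rfl⟩

lemma prodW_mem_W {l : List ℕ} (hl : ∀ i ∈ l, i ∈ Finset.Icc 1 n) :
    S.prodW l ∈ S.W := by
  induction l with
  | nil => rw [prodW_nil]; exact one_mem _
  | cons i l ih =>
    rw [prodW_cons]
    exact mul_mem (S.s_mem_W (hl i (List.mem_cons_self)))
      (ih fun j hj => hl j (List.mem_cons_of_mem i hj))

lemma exists_word_of_mem_W {w : V ≃ₗᵢ[ℝ] V} (hw : w ∈ S.W) :
    ∃ l : List ℕ, (∀ i ∈ l, i ∈ Finset.Icc 1 n) ∧ w = S.prodW l := by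
  refine Subgroup.closure_induction
    (p := fun x _ => ∃ l : List ℕ, (∀ i ∈ l, i ∈ Finset.Icc 1 n) ∧ x = S.prodW l)
    ?_ ?_ ?_ ?_ hw
  · rintro x ⟨i, hi, rfl⟩
    refine ⟨[i], ?_, (S.prodW_singleton i).symm⟩
    intro j hj
    rw [List.mem_singleton] at hj
    rw [hj]
    exact (mem_univ_icc_iff (n := n) i).mp hi
  · exact ⟨[], by simp, (S.prodW_nil).symm⟩
  · rintro x y _ _ ⟨l₁, hl₁, rfl⟩ ⟨l₂, hl₂, rfl⟩
    refine ⟨l₁ ++ l₂, ?_, (S.prodW_append l₁ l₂).symm⟩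
    intro j hj
    rcases List.mem_append.mp hj with h | h
    exacts [hl₁ j h, hl₂ j h]
  · rintro x _ ⟨l, hl, rfl⟩
    exact ⟨l.reverse, fun j hj => hl j (List.mem_reverse.mp hj),
      (S.prodW_reverse l).symm⟩

lemma len_le {w : V ≃ₗᵢ[ℝ] V} {l : List ℕ} (hl : ∀ i ∈ l, i ∈ Finset.Icc 1 n)
    (hw : w = S.prodW l) : S.len w ≤ l.length := by
  apply Nat.sInf_le
  exact ⟨l, fun i hi => (mem_univ_icc_iff (n := n) i).mpr (hl i hi), rfl, hw⟩

lemma exists_min_word {w : V ≃ₗᵢ[ℝ] V} (hw : w ∈ S.W) :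
    ∃ l : List ℕ, (∀ i ∈ l, i ∈ Finset.Icc 1 n) ∧ l.length = S.len w ∧
      w = S.prodW l := by
  obtain ⟨l₀, hl₀, hw₀⟩ := S.exists_word_of_mem_W hw
  have hne : {k | ∃ l : List ℕ, (∀ i ∈ l, i ∈ (Set.univ ∩ Set.Icc 1 n : Set ℕ)) ∧
      l.length = k ∧ w = S.prodW l}.Nonempty :=
    ⟨l₀.length, l₀, fun i hi => (mem_univ_icc_iff (n := n) i).mpr (hl₀ i hi), rfl, hw₀⟩
  obtain ⟨l, hl, hlen, heq⟩ := Nat.sInf_mem hne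
  exact ⟨l, fun i hi => (mem_univ_icc_iff (n := n) i).mp (hl i hi), hlen, heq⟩

/-! ### The climbing lemma -/

lemma exists_neg_inner (hsl : S.SimplyLaced) {α0 β : V} (hα0 : S.IsHighest α0)
    (hβ : β ∈ S.R) (hne : β ≠ α0) : ∃ i ∈ Finset.Icc 1 n, ⟪β, S.a i⟫ < 0 := by
  by_contra h
  push_neg at h
  obtain ⟨c, hc, hceq⟩ := hα0.2 β hβ
  have h1 : 0 ≤ ⟪β, α0 - β⟫ := by
    rw [hceq, inner_sum]
    apply Finset.sum_nonneg
    intro i hi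
    rw [real_inner_smul_right]
    exact mul_nonneg (hc i) (h i hi)
  rw [inner_sub_right] at h1
  have h2 : ⟪β, β⟫ ≤ ⟪β, α0⟫ := by linarith
  have hnorm : ‖β‖ = ‖α0‖ := S.norm_eq_of_simplyLaced hsl hβ hα0.1
  have h3 : ⟪β, α0⟫ ≤ ‖β‖ * ‖α0‖ := real_inner_le_norm β α0
  have h4 : ⟪β, β⟫ = ‖β‖ * ‖α0‖ := by
    rw [real_inner_self_eq_norm_mul_norm, hnorm]
  have h5 : ⟪β, α0⟫ = ⟪α0, α0⟫ := by
    have h6 : ⟪α0, α0⟫ = ‖β‖ * ‖α0‖ := by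
      rw [real_inner_self_eq_norm_mul_norm, hnorm]
    linarith
  exact hne (S.eq_of_inner_eq hsl hβ hα0.1 h5)

lemma climb (hsl : S.SimplyLaced) {α0 : V} (hα0 : S.IsHighest α0) :
    ∀ m : ℕ, ∀ β ∈ S.R, 1 ≤ S.height β → S.height α0 - S.height β = m →
    ∃ l : List ℕ, (∀ i ∈ l, i ∈ Finset.Icc 1 n) ∧ l.length = m ∧
      S.prodW l β = α0 := by
  intro m
  induction m with
  | zero =>
    intro β hβ h1 h0
    have hβα : β = α0 := by
      by_contra hne
      obtain ⟨i, hi, hlt⟩ := S.exists_neg_inner hsl hα0 hβ hne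
      have hc : 2 * ⟪β, S.a i⟫ / ⟪S.a i, S.a i⟫ < 0 :=
        div_neg_of_neg_of_pos (by linarith) (S.inner_a_self_pos hi)
      have hht : S.height (S.s i β) = S.height β - 2 * ⟪β, S.a i⟫ / ⟪S.a i, S.a i⟫ :=
        S.height_s hi β
      have hmem : S.s i β ∈ S.R := S.s_mem_R hi hβ
      have := S.height_le_highest hα0 hmem
      simp only [Nat.cast_zero] at h0
      linarith
    exact ⟨[], by simp, rfl, by rw [prodW_nil, one_apply, hβα]⟩
  | succ m ih =>
    intro β hβ h1 hm
    have hne : β ≠ α0 := by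
      intro h
      rw [h] at hm
      simp only [sub_self] at hm
      have : ((m : ℝ) + 1) = 0 := by push_cast at hm ⊢; linarith
      have hm0 : (0 : ℝ) ≤ (m : ℝ) := Nat.cast_nonneg m
      linarith
    obtain ⟨i, hi, hlt⟩ := S.exists_neg_inner hsl hα0 hβ hne
    obtain ⟨c, hc⟩ := S.cartan_int hβ hi
    have hbound := S.cartan_bound hsl hβ hi hc
    have hcneg : (c : ℝ) < 0 := by
      rw [← hc]
      exact div_neg_of_neg_of_pos (by linarith) (S.inner_a_self_pos hi)
    have hcneg' : c ≤ -1 := by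
      have : c < 0 := by exact_mod_cast hcneg
      omega
    have hcne2 : c ≠ -2 := by
      intro h2
      have hβeq : β = -(S.a i) := hbound.2.2 h2
      have : S.height β = -1 := by
        rw [hβeq, map_neg, S.height_a hi]
      linarith
    have hc1 : c = -1 := by omega
    set β' := S.s i β with hβ'
    have hβ'R : β' ∈ S.R := S.s_mem_R hi hβ
    have hht' : S.height β' = S.height β + 1 := by
      rw [hβ', S.height_s hi, hc, hc1]
      push_cast; ring
    have h1' : 1 ≤ S.height β' := by rw [hht']; linarith
    have hm' : S.height α0 - S.height β' = m := by
      rw [hht']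
      push_cast at hm ⊢
      linarith
    obtain ⟨l, hl, hlen, heq⟩ := ih β' hβ'R h1' hm'
    refine ⟨l ++ [i], ?_, ?_, ?_⟩
    · intro j hj
      rcases List.mem_append.mp hj with h | h
      · exact hl j h
      · rw [List.mem_singleton] at h; subst h; exact hi
    · simp [hlen]
    · rw [prodW_append, prodW_singleton, mul_apply]
      exact heq

/-! ### The lower bound -/

lemma gpot_step (hsl : S.SimplyLaced) {i : ℕ} (hi : i ∈ Finset.Icc 1 n) {γ : V}
    (hγ : γ ∈ S.R) : |gpot (S.height (S.s i γ)) - gpot (S.height γ)| ≤ 1 := by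
  obtain ⟨c, hc⟩ := S.cartan_int hγ hi
  obtain ⟨m, hm, hm0⟩ := S.height_int_ne_zero hγ
  obtain ⟨m', hm', hm'0⟩ := S.height_int_ne_zero (S.s_mem_R hi hγ)
  have hbound := S.cartan_bound hsl hγ hi hc
  have hrel : (m' : ℝ) = (m : ℝ) - (c : ℝ) := by
    rw [← hm', ← hm, S.height_s hi, hc]
  have hrelz : m' = m - c := by exact_mod_cast hrel
  have key : |(gzpot m' : ℤ) - gzpot m| ≤ 1 := by
    rw [abs_le]
    rcases eq_or_ne c 2 with h2 | h2
    · have hγeq : γ = S.a i := hbound.2.1 h2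
      have : (m : ℝ) = 1 := by rw [← hm, hγeq, S.height_a hi]
      have hm1 : m = 1 := by exact_mod_cast this
      have hm'1 : m' = -1 := by omega
      subst hm1 hm'1
      unfold gzpot
      norm_num
    rcases eq_or_ne c (-2) with h2' | h2'
    · have hγeq : γ = -(S.a i) := hbound.2.2 h2'
      have : (m : ℝ) = -1 := by
        rw [← hm, hγeq, map_neg, S.height_a hi]
      have hm1 : m = -1 := by exact_mod_cast this
      have hm'1 : m' = 1 := by omega
      subst hm1 hm'1
      unfold gzpot
      norm_num
    · have hcsmall : -1 ≤ c ∧ c ≤ 1 := by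
        have := hbound.1
        omega
      unfold gzpot
      split_ifs <;> omega
  calc |gpot (S.height (S.s i γ)) - gpot (S.height γ)|
      = |(gzpot m' : ℝ) - (gzpot m : ℝ)| := by rw [hm, hm', gpot_intCast, gpot_intCast]
    _ ≤ 1 := by exact_mod_cast (by push_cast [← Int.cast_sub, ← Int.cast_abs]; exact_mod_cast key :
        |((gzpot m' - gzpot m : ℤ) : ℝ)| ≤ (1 : ℝ))

lemma gpot_lower (hsl : S.SimplyLaced) :
    ∀ l : List ℕ, (∀ i ∈ l, i ∈ Finset.Icc 1 n) → ∀ β ∈ S.R,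
    |gpot (S.height (S.prodW l β)) - gpot (S.height β)| ≤ l.length := by
  intro l
  induction l with
  | nil =>
    intro _ β hβ
    rw [prodW_nil, one_apply]
    simp
  | cons i l ih =>
    intro hval β hβ
    have h1 := ih (fun j hj => hval j (List.mem_cons_of_mem i hj)) β hβ
    have hγR : S.prodW l β ∈ S.R :=
      S.prodW_mem_R (fun j hj => hval j (List.mem_cons_of_mem i hj)) hβ
    have h2 := S.gpot_step hsl (hval i (List.mem_cons_self)) hγR
    rw [prodW_cons, mul_apply]
    have htri := abs_sub_le (gpot (S.height (S.s i (S.prodW l β))))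
      (gpot (S.height (S.prodW l β))) (gpot (S.height β))
    have hlc : (List.length (i :: l) : ℝ) = (l.length : ℝ) + 1 := by
      push_cast [List.length_cons]; ring
    rw [hlc]
    linarith

end RootSystemWithBase

variable {V}

/-- Assume `R` is simply laced and let `α = a r` be a simple root.  Let `u_α`
be the unique element of minimal length in `W` with `u_α⁻¹(α_0) = α` and set `v_α := u_α s_α`.
Then `ℓ(v_α) = ht(α_0)`, the height of the highest root. -/
theorem statement1 {n : ℕ} (S : RootSystemWithBase V n) (hsl : S.SimplyLaced)
    (r : ℕ) (hr : r ∈ Finset.Icc 1 n) (α0 : V) (hα0 : S.IsHighest α0)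
    (u : V ≃ₗᵢ[ℝ] V) (huW : u ∈ S.W) (huα : u⁻¹ α0 = S.a r)
    (humin : ∀ u' ∈ S.W, u'⁻¹ α0 = S.a r → S.len u ≤ S.len u')
    (k : ℕ → ℤ) (hk : α0 = ∑ i ∈ Finset.Icc 1 n, (k i : ℝ) • S.a i) :
    (S.len (u * S.s r) : ℤ) = ∑ i ∈ Finset.Icc 1 n, k i := by
  set H : ℤ := ∑ i ∈ Finset.Icc 1 n, k i with hH
  -- the height of the highest root is `H`
  have hta0 : S.height α0 = (H : ℝ) := by
    rw [hk, S.height_combo, hH]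
    push_cast
    rfl
  have har : S.a r ∈ S.R := S.simple_mem r hr
  have h1H : 1 ≤ H := by
    have h := S.height_le_highest hα0 har
    rw [S.height_a hr, hta0] at h
    exact_mod_cast h
  -- upper bound: climb to build a short word for some `u'` with `u'⁻¹ α0 = a r`
  obtain ⟨l0, hl0, hl0len, hl0eq⟩ := S.climb hsl hα0 (H - 1).toNat (S.a r) har
    (by rw [S.height_a hr])
    (by
      rw [S.height_a hr, hta0]
      have : ((H - 1).toNat : ℤ) = H - 1 := Int.toNat_of_nonneg (by omega)
      have h2 : (((H - 1).toNat : ℤ) : ℝ) = ((H : ℝ) - 1) := by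
        rw [this]; push_cast; ring
      rw [← h2]
      norm_cast)
  have hu'W : S.prodW l0 ∈ S.W := S.prodW_mem_W hl0
  have hu'α : (S.prodW l0)⁻¹ α0 = S.a r := by
    rw [LinearIsometryEquiv.inv_def]
    rw [← hl0eq, LinearIsometryEquiv.symm_apply_apply]
  have hlenu : S.len u ≤ (H - 1).toNat := by
    refine le_trans (humin _ hu'W hu'α) ?_
    rw [← hl0len]
    exact S.len_le hl0 rfl
  obtain ⟨l1, hl1, hl1len, hl1eq⟩ := S.exists_min_word huW
  have hv : u * S.s r = S.prodW (l1 ++ [r]) := by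
    rw [S.prodW_append, S.prodW_singleton, ← hl1eq]
  have hupper : S.len (u * S.s r) ≤ S.len u + 1 := by
    have h := S.len_le (w := u * S.s r) (l := l1 ++ [r]) ?_ hv
    · rwa [List.length_append, List.length_singleton, hl1len] at h
    · intro j hj
      rcases List.mem_append.mp hj with h | h
      · exact hl1 j h
      · rw [List.mem_singleton] at h; subst h; exact hr
  -- lower bound
  have hvW : u * S.s r ∈ S.W := mul_mem huW (S.s_mem_W hr)
  obtain ⟨l2, hl2, hl2len, hl2eq⟩ := S.exists_min_word hvW
  have huar : u (S.a r) = α0 := by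
    rw [LinearIsometryEquiv.inv_def] at huα
    rw [← huα]
    exact LinearIsometryEquiv.apply_symm_apply u α0
  have hvar : S.prodW l2 (S.a r) = -α0 := by
    rw [← hl2eq, RootSystemWithBase.mul_apply, S.s_a_self, map_neg, huar]
  have hlow := S.gpot_lower hsl l2 hl2 (S.a r) har
  rw [hvar, map_neg, hta0, S.height_a hr, hl2len] at hlow
  have hg1 : RootSystemWithBase.gpot 1 = 1 := by
    unfold RootSystemWithBase.gpot
    rw [if_pos one_pos]
  have h1HR : (1 : ℝ) ≤ (H : ℝ) := by exact_mod_cast h1H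
  have hg2 : RootSystemWithBase.gpot (-(H : ℝ)) = -(H : ℝ) + 1 := by
    unfold RootSystemWithBase.gpot
    rw [if_neg (by linarith : ¬(0 : ℝ) < -(H : ℝ))]
  rw [hg1, hg2] at hlow
  have hlow' : (H : ℝ) ≤ (S.len (u * S.s r) : ℝ) := by
    have habs : |(-(H : ℝ) + 1) - 1| = (H : ℝ) := by
      rw [abs_sub_comm]
      rw [abs_of_nonneg (by linarith : (0:ℝ) ≤ 1 - (-(H : ℝ) + 1))]
      ring
    rw [habs] at hlow
    exact hlow
  have hge : H ≤ (S.len (u * S.s r) : ℤ) := by exact_mod_cast hlow'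
  have hle : (S.len (u * S.s r) : ℤ) ≤ H := by
    have h1 : (S.len (u * S.s r) : ℤ) ≤ (S.len u : ℤ) + 1 := by exact_mod_cast hupper
    have h2 : (S.len u : ℤ) ≤ ((H - 1).toNat : ℤ) := by exact_mod_cast hlenu
    have h3 : ((H - 1).toNat : ℤ) = H - 1 := Int.toNat_of_nonneg (by omega)
    omega
  omega

end PaperFormal
end
end

section
/- Let R be of type D_n (n ≥ 4) and for 1 ≤ i ≤ n−2 set u_i := s_i s_{i+1} ⋯ s_{n−2} s_{n−1} s_n s_{n−2} s_{n−3} ⋯ s_{i+1} s_i ∈ W. Then: (1) u_i(α_j) = α_j for all 1 ≤ j ≤ i−2; (2)(i) u_i(α_{i−1}) = α_{i−1} + 2α_i + 2α_{i+1} + ⋯ + 2α_{n−2} + α_{n−1} + α_n for all 2 ≤ i ≤ n−2, and (ii) u_i(α_i) = −(α_i + 2α_{i+1} + ⋯ + 2α_{n−2} + α_{n−1} + α_n) for all 1 ≤ i ≤ n−2 (in particular u_i(α_{i−1} + α_i) = α_{i−1} + α_i for 2 ≤ i ≤ n−2); (3)(i) u_i(α_j) = α_j for all i+1 ≤ j ≤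 n−2, and (ii) u_i(α_{n−1}) = α_n and u_i(α_n) = α_{n−1} for all 1 ≤ i ≤ n−2. -/
noncomputable section

open scoped Classical

local notation "⟪" x ", " y "⟫" => @inner ℝ _ _ x y

namespace PaperFormal

variable (V : Type*) [NormedAddCommGroup V] [InnerProductSpace ℝ V] [FiniteDimensional ℝ V]

variable {V}

/-- Adjacency in the Dynkin diagram of type `D_n` (Bourbaki labeling):
`i — i+1` for `1 ≤ i ≤ n-2`, and `(n-2) — n`. -/
def adjD (n i j : ℕ) : Prop :=
  (j = i + 1 ∧ i + 2 ≤ n) ∨ (i = j + 1 ∧ j + 2 ≤ n) ∨ (i + 2 = n ∧ j = n) ∨ (j + 2 = n ∧ i = n)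

/-- The word `s_i s_{i+1} ⋯ s_{n-2} s_{n-1} s_n s_{n-2} s_{n-3} ⋯ s_{i+1} s_i` (type `D_n`). -/
def uListD (n i : ℕ) : List ℕ :=
  List.range' i (n - 1 - i) ++ [n - 1, n] ++ (List.range' i (n - 1 - i)).reverse


section AuxStatement6

variable {V : Type*} [NormedAddCommGroup V] [InnerProductSpace ℝ V] [FiniteDimensional ℝ V]

lemma sref_apply_two (v β : V) (hv : ⟪v, v⟫ = (2 : ℝ)) :
    sref V v β = β - ⟪β, v⟫ • v := by
  have hnorm : ((‖v‖ : ℝ) ^ 2) = 2 := by rw [← real_inner_self_eq_norm_sq]; exact hv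
  rw [sref, Submodule.reflection_apply, Submodule.starProjection_orthogonal_val,
    Submodule.starProjection_singleton, hnorm, real_inner_comm v β, two_smul]
  module

lemma uListD_succ_eq {n i : ℕ} (h : i + 3 ≤ n) :
    uListD n i = i :: (uListD n (i + 1) ++ [i]) := by
  unfold uListD
  have h1 : n - 1 - i = (n - 1 - (i + 1)) + 1 := by omega
  rw [h1, List.range'_succ]
  simp [List.append_assoc]

lemma uListD_base_eq {n : ℕ} (hn : 4 ≤ n) :
    uListD n (n - 2) = [n - 2, n - 1, n, n - 2] := by
  unfold uListD
  have h1 : n - 1 - (n - 2) = 1 := by omega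
  rw [h1, List.range'_one]
  rfl

lemma sum_Icc_head {M : Type*} [AddCommMonoid M] {i m : ℕ} (h : i ≤ m) (f : ℕ → M) :
    ∑ j ∈ Finset.Icc i m, f j = f i + ∑ j ∈ Finset.Icc (i + 1) m, f j := by
  have he : Finset.Icc i m = insert i (Finset.Icc (i + 1) m) := by
    ext x; simp only [Finset.mem_insert, Finset.mem_Icc]; omega
  rw [he, Finset.sum_insert (by simp)]

namespace RootSystemWithBase

variable {n : ℕ} (S : RootSystemWithBase V n)

lemma prodW_cons_apply (i : ℕ) (l : List ℕ) (x : V) :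
    S.prodW (i :: l) x = S.s i (S.prodW l x) := by
  simp [prodW, List.prod_cons, LinearIsometryEquiv.coe_mul]

lemma prodW_append_apply (l m : List ℕ) (x : V) :
    S.prodW (l ++ m) x = S.prodW l (S.prodW m x) := by
  simp [prodW, List.prod_append, LinearIsometryEquiv.coe_mul]

lemma prodW_singleton_apply (i : ℕ) (x : V) :
    S.prodW [i] x = S.s i x := by
  simp [prodW]

/-- The vector `θ_i = α_i + 2α_{i+1} + ⋯ + 2α_{n-2} + α_{n-1} + α_n`. -/
def theta (i : ℕ) : V :=
  S.a i + (∑ j ∈ Finset.Icc (i + 1) (n - 2), (2 : ℝ) • S.a j) + S.a (n - 1) + S.a n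

lemma theta_succ {i : ℕ} (h : i + 1 ≤ n - 2) :
    S.theta i = S.a i + S.a (i + 1) + S.theta (i + 1) := by
  unfold theta
  rw [sum_Icc_head h]
  module

variable {S}

section InnerFacts

variable (hD : ∀ i ∈ Finset.Icc 1 n, ∀ j ∈ Finset.Icc 1 n,
      ⟪S.a i, S.a j⟫ = if i = j then 2 else if adjD n i j then -1 else 0)

include hD

lemma aa_self {i : ℕ} (h1 : 1 ≤ i) (h2 : i ≤ n) : ⟪S.a i, S.a i⟫ = 2 := by
  rw [hD i (Finset.mem_Icc.mpr ⟨h1, h2⟩) i (Finset.mem_Icc.mpr ⟨h1, h2⟩), if_pos rfl]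

lemma aa_adj {i j : ℕ} (h1 : 1 ≤ i) (h2 : i ≤ n) (h3 : 1 ≤ j) (h4 : j ≤ n)
    (h5 : i ≠ j) (h6 : adjD n i j) : ⟪S.a i, S.a j⟫ = -1 := by
  rw [hD i (Finset.mem_Icc.mpr ⟨h1, h2⟩) j (Finset.mem_Icc.mpr ⟨h3, h4⟩),
    if_neg h5, if_pos h6]

lemma aa_zero {i j : ℕ} (h1 : 1 ≤ i) (h2 : i ≤ n) (h3 : 1 ≤ j) (h4 : j ≤ n)
    (h5 : i ≠ j) (h6 : ¬ adjD n i j) : ⟪S.a i, S.a j⟫ = 0 := by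
  rw [hD i (Finset.mem_Icc.mpr ⟨h1, h2⟩) j (Finset.mem_Icc.mpr ⟨h3, h4⟩),
    if_neg h5, if_neg h6]

lemma s_apply_simple {k : ℕ} (h1 : 1 ≤ k) (h2 : k ≤ n) (β : V) :
    S.s k β = β - ⟪β, S.a k⟫ • S.a k := by
  rw [RootSystemWithBase.s, sref_apply_two _ _ (aa_self hD h1 h2)]

lemma inner_theta_succ (hn : 4 ≤ n) {i : ℕ} (h1 : 1 ≤ i) (h2 : i + 3 ≤ n) :
    ⟪S.theta (i + 1), S.a i⟫ = -1 := by
  have hz : ∑ k ∈ Finset.Icc (i + 2) (n - 2), ⟪(2 : ℝ) • S.a k, S.a i⟫ = 0 :=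
    Finset.sum_eq_zero (fun k hk => by
      simp only [Finset.mem_Icc] at hk
      rw [real_inner_smul_left,
        aa_zero hD (by omega) (by omega) (by omega) (by omega) (by omega)
          (by unfold adjD; omega), mul_zero])
  unfold theta
  rw [inner_add_left, inner_add_left, inner_add_left, sum_inner, hz,
    aa_adj hD (by omega) (by omega) (by omega) (by omega) (by omega) (by unfold adjD; omega),
    aa_zero hD (by omega) (by omega) (by omega) (by omega) (by omega) (by unfold adjD; omega),
    aa_zero hD (by omega) (by omega) (by omega) (by omega) (by omega) (by unfold adjD; omega)]
  norm_num

/-- The collection of formulas for `u_i` that we prove by downward induction. -/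
def Good (S : RootSystemWithBase V n) (i : ℕ) : Prop :=
  (∀ j, 1 ≤ j → j + 2 ≤ i → S.prodW (uListD n i) (S.a j) = S.a j) ∧
  (2 ≤ i → S.prodW (uListD n i) (S.a (i - 1)) = S.a (i - 1) + S.a i + S.theta i) ∧
  (S.prodW (uListD n i) (S.a i) = -S.theta i) ∧
  (∀ j, i + 1 ≤ j → j ≤ n - 2 → S.prodW (uListD n i) (S.a j) = S.a j) ∧
  (S.prodW (uListD n i) (S.a (n - 1)) = S.a n) ∧
  (S.prodW (uListD n i) (S.a n) = S.a (n - 1))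

lemma key_base (hn : 4 ≤ n) : Good S (n - 2) := by
  have hs : ∀ k, 1 ≤ k → k ≤ n → ∀ β : V, S.s k β = β - ⟪β, S.a k⟫ • S.a k :=
    fun k hk hk' β => s_apply_simple hD hk hk' β
  have hu0 : ∀ x : V, S.prodW (uListD n (n - 2)) x
      = S.s (n - 2) (S.s (n - 1) (S.s n (S.s (n - 2) x))) := by
    intro x
    rw [uListD_base_eq hn, S.prodW_cons_apply, S.prodW_cons_apply, S.prodW_cons_apply,
      S.prodW_singleton_apply]
  have hmm : ⟪S.a (n - 2), S.a (n - 2)⟫ = 2 := aa_self hD (by omega) (by omega)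
  have h11 : ⟪S.a (n - 1), S.a (n - 1)⟫ = 2 := aa_self hD (by omega) (by omega)
  have hnn : ⟪S.a n, S.a n⟫ = 2 := aa_self hD (by omega) (by omega)
  have hm1 : ⟪S.a (n - 2), S.a (n - 1)⟫ = -1 :=
    aa_adj hD (by omega) (by omega) (by omega) (by omega) (by omega) (by unfold adjD; omega)
  have h1m : ⟪S.a (n - 1), S.a (n - 2)⟫ = -1 :=
    aa_adj hD (by omega) (by omega) (by omega) (by omega) (by omega) (by unfold adjD; omega)
  have hmn : ⟪S.a (n - 2), S.a n⟫ = -1 :=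
    aa_adj hD (by omega) (by omega) (by omega) (by omega) (by omega) (by unfold adjD; omega)
  have hnm : ⟪S.a n, S.a (n - 2)⟫ = -1 :=
    aa_adj hD (by omega) (by omega) (by omega) (by omega) (by omega) (by unfold adjD; omega)
  have h1n : ⟪S.a (n - 1), S.a n⟫ = 0 :=
    aa_zero hD (by omega) (by omega) (by omega) (by omega) (by omega) (by unfold adjD; omega)
  have hn1 : ⟪S.a n, S.a (n - 1)⟫ = 0 :=
    aa_zero hD (by omega) (by omega) (by omega) (by omega) (by omega) (by unfold adjD; omega)
  have hth0 : S.theta (n - 2) = S.a (n - 2) + 0 + S.a (n - 1) + S.a n := by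
    unfold theta
    rw [Finset.Icc_eq_empty (by omega), Finset.sum_empty]
  refine ⟨?_, ?_, ?_, ?_, ?_, ?_⟩
  · -- fixes a j for j + 2 ≤ n - 2
    intro j hj1 hj2
    have hjm : ⟪S.a j, S.a (n - 2)⟫ = 0 :=
      aa_zero hD (by omega) (by omega) (by omega) (by omega) (by omega) (by unfold adjD; omega)
    have hj1' : ⟪S.a j, S.a (n - 1)⟫ = 0 :=
      aa_zero hD (by omega) (by omega) (by omega) (by omega) (by omega) (by unfold adjD; omega)
    have hjn : ⟪S.a j, S.a n⟫ = 0 :=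
      aa_zero hD (by omega) (by omega) (by omega) (by omega) (by omega) (by unfold adjD; omega)
    have e1 : S.s (n - 2) (S.a j) = S.a j := by
      rw [hs (n - 2) (by omega) (by omega), hjm, zero_smul, sub_zero]
    have e2 : S.s n (S.a j) = S.a j := by
      rw [hs n (by omega) (by omega), hjn, zero_smul, sub_zero]
    have e3 : S.s (n - 1) (S.a j) = S.a j := by
      rw [hs (n - 1) (by omega) (by omega), hj1', zero_smul, sub_zero]
    rw [hu0, e1, e2, e3, e1]
  · -- a (n-2-1)
    intro _
    have h3m : ⟪S.a (n - 2 - 1), S.a (n - 2)⟫ = -1 :=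
      aa_adj hD (by omega) (by omega) (by omega) (by omega) (by omega) (by unfold adjD; omega)
    have h31 : ⟪S.a (n - 2 - 1), S.a (n - 1)⟫ = 0 :=
      aa_zero hD (by omega) (by omega) (by omega) (by omega) (by omega) (by unfold adjD; omega)
    have h3n : ⟪S.a (n - 2 - 1), S.a n⟫ = 0 :=
      aa_zero hD (by omega) (by omega) (by omega) (by omega) (by omega) (by unfold adjD; omega)
    have e1 : S.s (n - 2) (S.a (n - 2 - 1)) = S.a (n - 2 - 1) + S.a (n - 2) := by
      rw [hs (n - 2) (by omega) (by omega), h3m]; module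
    have e2 : S.s n (S.a (n - 2 - 1) + S.a (n - 2))
        = S.a (n - 2 - 1) + S.a (n - 2) + S.a n := by
      rw [hs n (by omega) (by omega)]
      simp only [inner_add_left, h3n, hmn]
      module
    have e3 : S.s (n - 1) (S.a (n - 2 - 1) + S.a (n - 2) + S.a n)
        = S.a (n - 2 - 1) + S.a (n - 2) + S.a n + S.a (n - 1) := by
      rw [hs (n - 1) (by omega) (by omega)]
      simp only [inner_add_left, h31, hm1, hn1]
      module
    have e4 : S.s (n - 2) (S.a (n - 2 - 1) + S.a (n - 2) + S.a n + S.a (n - 1))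
        = S.a (n - 2 - 1) + S.a (n - 2) + S.theta (n - 2) := by
      rw [hs (n - 2) (by omega) (by omega), hth0]
      simp only [inner_add_left, h3m, hmm, hnm, h1m]
      module
    rw [hu0, e1, e2, e3, e4]
  · -- a (n-2) ↦ -θ
    have e1 : S.s (n - 2) (S.a (n - 2)) = -S.a (n - 2) := by
      rw [hs (n - 2) (by omega) (by omega), hmm]; module
    have e2 : S.s n (-S.a (n - 2)) = -S.a (n - 2) - S.a n := by
      rw [hs n (by omega) (by omega)]
      simp only [inner_neg_left, hmn]
      module
    have e3 : S.s (n - 1) (-S.a (n - 2) - S.a n) = -S.a (n - 2) - S.a n - S.a (n - 1) := by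
      rw [hs (n - 1) (by omega) (by omega)]
      simp only [inner_sub_left, inner_neg_left, hm1, hn1]
      module
    have e4 : S.s (n - 2) (-S.a (n - 2) - S.a n - S.a (n - 1)) = -S.theta (n - 2) := by
      rw [hs (n - 2) (by omega) (by omega), hth0]
      simp only [inner_sub_left, inner_neg_left, hmm, hnm, h1m]
      module
    rw [hu0, e1, e2, e3, e4]
  · -- vacuous range
    intro j hj1 hj2
    exfalso; omega
  · -- a (n-1) ↦ a n
    have e1 : S.s (n - 2) (S.a (n - 1)) = S.a (n - 1) + S.a (n - 2) := by
      rw [hs (n - 2) (by omega) (by omega), h1m]; module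
    have e2 : S.s n (S.a (n - 1) + S.a (n - 2)) = S.a (n - 1) + S.a (n - 2) + S.a n := by
      rw [hs n (by omega) (by omega)]
      simp only [inner_add_left, h1n, hmn]
      module
    have e3 : S.s (n - 1) (S.a (n - 1) + S.a (n - 2) + S.a n) = S.a (n - 2) + S.a n := by
      rw [hs (n - 1) (by omega) (by omega)]
      simp only [inner_add_left, h11, hm1, hn1]
      module
    have e4 : S.s (n - 2) (S.a (n - 2) + S.a n) = S.a n := by
      rw [hs (n - 2) (by omega) (by omega)]
      simp only [inner_add_left, hmm, hnm]
      module
    rw [hu0, e1, e2, e3, e4]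
  · -- a n ↦ a (n-1)
    have e1 : S.s (n - 2) (S.a n) = S.a n + S.a (n - 2) := by
      rw [hs (n - 2) (by omega) (by omega), hnm]; module
    have e2 : S.s n (S.a n + S.a (n - 2)) = S.a (n - 2) := by
      rw [hs n (by omega) (by omega)]
      simp only [inner_add_left, hnn, hmn]
      module
    have e3 : S.s (n - 1) (S.a (n - 2)) = S.a (n - 2) + S.a (n - 1) := by
      rw [hs (n - 1) (by omega) (by omega), hm1]; module
    have e4 : S.s (n - 2) (S.a (n - 2) + S.a (n - 1)) = S.a (n - 1) := by
      rw [hs (n - 2) (by omega) (by omega)]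
      simp only [inner_add_left, hmm, h1m]
      module
    rw [hu0, e1, e2, e3, e4]

lemma key_step (hn : 4 ≤ n) {i : ℕ} (h1 : 1 ≤ i) (h2 : i + 3 ≤ n)
    (ih : Good S (i + 1)) : Good S i := by
  obtain ⟨ih1, ih2, ih3, ih4, ih5, ih6⟩ := ih
  have hs : ∀ k, 1 ≤ k → k ≤ n → ∀ β : V, S.s k β = β - ⟪β, S.a k⟫ • S.a k :=
    fun k hk hk' β => s_apply_simple hD hk hk' β
  have hu : ∀ x : V, S.prodW (uListD n i) x
      = S.s i (S.prodW (uListD n (i + 1)) (S.s i x)) := by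
    intro x
    rw [uListD_succ_eq h2, S.prodW_cons_apply, S.prodW_append_apply, S.prodW_singleton_apply]
  have hii : ⟪S.a i, S.a i⟫ = 2 := aa_self hD (by omega) (by omega)
  have hip : ⟪S.a (i + 1), S.a i⟫ = -1 :=
    aa_adj hD (by omega) (by omega) (by omega) (by omega) (by omega) (by unfold adjD; omega)
  have hn1 : ⟪S.a (n - 1), S.a i⟫ = 0 :=
    aa_zero hD (by omega) (by omega) (by omega) (by omega) (by omega) (by unfold adjD; omega)
  have hnn : ⟪S.a n, S.a i⟫ = 0 :=
    aa_zero hD (by omega) (by omega) (by omega) (by omega) (by omega) (by unfold adjD; omega)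
  have hth : ⟪S.theta (i + 1), S.a i⟫ = -1 := inner_theta_succ hD hn h1 h2
  have hA : S.prodW (uListD n (i + 1)) (S.a i) = S.a i + S.a (i + 1) + S.theta (i + 1) := by
    have h := ih2 (by omega)
    simpa using h
  refine ⟨?_, ?_, ?_, ?_, ?_, ?_⟩
  · intro j hj1 hj2
    have hji : ⟪S.a j, S.a i⟫ = 0 :=
      aa_zero hD (by omega) (by omega) (by omega) (by omega) (by omega) (by unfold adjD; omega)
    have e0 : S.s i (S.a j) = S.a j := by
      rw [hs i (by omega) (by omega), hji, zero_smul, sub_zero]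
    rw [hu, e0, ih1 j hj1 (by omega), e0]
  · intro h2i
    have him : ⟪S.a (i - 1), S.a i⟫ = -1 :=
      aa_adj hD (by omega) (by omega) (by omega) (by omega) (by omega) (by unfold adjD; omega)
    have e1 : S.s i (S.a (i - 1)) = S.a (i - 1) + S.a i := by
      rw [hs i (by omega) (by omega), him]; module
    rw [hu, e1, map_add, ih1 (i - 1) (by omega) (by omega), hA,
      hs i (by omega) (by omega), S.theta_succ (by omega : i + 1 ≤ n - 2)]
    simp only [inner_add_left, him, hii, hip, hth]
    module
  · have e1 : S.s i (S.a i) = -S.a i := by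
      rw [hs i (by omega) (by omega), hii]; module
    rw [hu, e1, map_neg, hA, hs i (by omega) (by omega),
      S.theta_succ (by omega : i + 1 ≤ n - 2)]
    simp only [inner_neg_left, inner_add_left, hii, hip, hth]
    module
  · intro j hj1 hj2
    by_cases hj : j = i + 1
    · subst hj
      have e1 : S.s i (S.a (i + 1)) = S.a (i + 1) + S.a i := by
        rw [hs i (by omega) (by omega), hip]; module
      rw [hu, e1, map_add, ih3, hA, hs i (by omega) (by omega)]
      simp only [inner_add_left, inner_neg_left, hth, hii, hip]
      module
    · have hij : ⟪S.a j, S.a i⟫ = 0 :=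
        aa_zero hD (by omega) (by omega) (by omega) (by omega) (by omega)
          (by unfold adjD; omega)
      have e0 : S.s i (S.a j) = S.a j := by
        rw [hs i (by omega) (by omega), hij, zero_smul, sub_zero]
      rw [hu, e0, ih4 j (by omega) hj2, e0]
  · have e0 : S.s i (S.a (n - 1)) = S.a (n - 1) := by
      rw [hs i (by omega) (by omega), hn1, zero_smul, sub_zero]
    have e0' : S.s i (S.a n) = S.a n := by
      rw [hs i (by omega) (by omega), hnn, zero_smul, sub_zero]
    rw [hu, e0, ih5, e0']
  · have e0 : S.s i (S.a (n - 1)) = S.a (n - 1) := by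
      rw [hs i (by omega) (by omega), hn1, zero_smul, sub_zero]
    have e0' : S.s i (S.a n) = S.a n := by
      rw [hs i (by omega) (by omega), hnn, zero_smul, sub_zero]
    rw [hu, e0', ih6, e0]

lemma key_good (hn : 4 ≤ n) : ∀ i, 1 ≤ i → i ≤ n - 2 → Good S i := by
  have H : ∀ d i, i + d = n - 2 → 1 ≤ i → Good S i := by
    intro d
    induction d with
    | zero =>
      intro i hi h1
      have : i = n - 2 := by omega
      subst this
      exact key_base hD hn
    | succ d ihd =>
      intro i hi h1
      exact key_step hD hn h1 (by omega) (ihd (i + 1) (by omega) (by omega))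
  intro i h1 h2
  exact H (n - 2 - i) i (by omega) h1

end InnerFacts

end RootSystemWithBase

end AuxStatement6

/-- In type `D_n` (`n ≥ 4`), for `1 ≤ i ≤ n-2` let
`u_i = s_i s_{i+1} ⋯ s_{n-2} s_{n-1} s_n s_{n-2} s_{n-3} ⋯ s_{i+1} s_i`.  Then:
(1) `u_i(α_j) = α_j` for `1 ≤ j ≤ i-2`;
(2)(i) `u_i(α_{i-1}) = α_{i-1} + 2α_i + ⋯ + 2α_{n-2} + α_{n-1} + α_n` for `2 ≤ i ≤ n-2`,
(ii) `u_i(α_i) = -(α_i + 2α_{i+1} + ⋯ + 2α_{n-2} + α_{n-1} + α_n)`, and in particular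
`u_i(α_{i-1} + α_i) = α_{i-1} + α_i`;
(3)(i) `u_i(α_j) = α_j` for `i+1 ≤ j ≤ n-2`, and (ii) `u_i(α_{n-1}) = α_n`,
`u_i(α_n) = α_{n-1}`, and in particular `u_i(α_{n-1} + α_n) = α_{n-1} + α_n`. -/
theorem statement6 {n : ℕ} (S : RootSystemWithBase V n) (hn : 4 ≤ n)
    (hD : ∀ i ∈ Finset.Icc 1 n, ∀ j ∈ Finset.Icc 1 n,
      ⟪S.a i, S.a j⟫ = if i = j then 2 else if adjD n i j then -1 else 0) :
    (∀ i, 1 ≤ i → i ≤ n - 2 → ∀ j, 1 ≤ j → j ≤ i - 2 →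
      S.prodW (uListD n i) (S.a j) = S.a j) ∧
    ((∀ i, 2 ≤ i → i ≤ n - 2 →
      S.prodW (uListD n i) (S.a (i - 1)) =
        S.a (i - 1) + (∑ j ∈ Finset.Icc i (n - 2), (2 : ℝ) • S.a j) + S.a (n - 1) + S.a n) ∧
     (∀ i, 1 ≤ i → i ≤ n - 2 →
      S.prodW (uListD n i) (S.a i) =
        -(S.a i + (∑ j ∈ Finset.Icc (i + 1) (n - 2), (2 : ℝ) • S.a j) + S.a (n - 1) + S.a n)) ∧
     (∀ i, 2 ≤ i → i ≤ n - 2 →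
      S.prodW (uListD n i) (S.a (i - 1) + S.a i) = S.a (i - 1) + S.a i)) ∧
    ((∀ i, 1 ≤ i → i ≤ n - 2 → ∀ j, i + 1 ≤ j → j ≤ n - 2 →
      S.prodW (uListD n i) (S.a j) = S.a j) ∧
     (∀ i, 1 ≤ i → i ≤ n - 2 →
      S.prodW (uListD n i) (S.a (n - 1)) = S.a n ∧
      S.prodW (uListD n i) (S.a n) = S.a (n - 1) ∧
      S.prodW (uListD n i) (S.a (n - 1) + S.a n) = S.a (n - 1) + S.a n)) := by
  have key := RootSystemWithBase.key_good hD hn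
  refine ⟨?_, ⟨?_, ?_, ?_⟩, ⟨?_, ?_⟩⟩
  · intro i hi1 hi2 j hj1 hj2
    exact (key i hi1 hi2).1 j hj1 (by omega)
  · intro i hi1 hi2
    have h := (key i (by omega) hi2).2.1 hi1
    rw [h, sum_Icc_head (by omega : i ≤ n - 2) (fun j => (2 : ℝ) • S.a j)]
    simp only [RootSystemWithBase.theta]
    module
  · intro i hi1 hi2
    have h := (key i hi1 hi2).2.2.1
    rw [h]
    simp only [RootSystemWithBase.theta]
  · intro i hi1 hi2
    have h1 := (key i (by omega) hi2).2.1 hi1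
    have h2 := (key i (by omega) hi2).2.2.1
    rw [map_add, h1, h2]
    abel
  · intro i hi1 hi2 j hj1 hj2
    exact (key i hi1 hi2).2.2.2.1 j hj1 hj2
  · intro i hi1 hi2
    obtain ⟨_, _, _, _, h5, h6⟩ := key i hi1 hi2
    exact ⟨h5, h6, by rw [map_add, h5, h6]; abel⟩

end PaperFormal
end
end
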